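/- Let A be a skew brace and I an ideal of A. Write J = [I,A]_Ab for the additive subgroup generated by { i+b-i-b, i*b, i∘b∘i'∘b' : i ∈ I, b ∈ A }. Then for all k ∈ J and b ∈ A, the element b*k belongs to J. -/

import Mathlib

/-- A skew brace: a type with an additive group structure and a second group
operation `circ` (with inverse `cinv` and the same identity `0`) satisfying the
skew brace compatibility law `a ∘ (b + c) = a ∘ b - a + a ∘ c`. -/
class SkewBrace (A : Type*) extends AddGroup A where
  circ : A → A → A
  cinv : A → A
  circ_assoc : ∀ a b c : A, circ (circ a b) c = circ a (circ b c)
  zero_circ : ∀ a : A, circ 0 a = a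
  circ_zero : ∀ a : A, circ a 0 = a
  cinv_circ : ∀ a : A, circ (cinv a) a = 0
  circ_cinv : ∀ a : A, circ a (cinv a) = 0
  compat : ∀ a b c : A, circ a (b + c) = circ a b - a + circ a c

namespace SkewBrace

variable {A : Type*} [SkewBrace A]

/-- The star operation `a * b = -a + a ∘ b - b`. -/
def star (a b : A) : A := -a + circ a b - b

/-- The right distributor `[a,b,c] = (a+b)∘c - b∘c + c - a∘c`. -/
def rd (a b c : A) : A := circ (a + b) c - circ b c + c - circ a c

/-- An ideal of a skew brace: a normal additive subgroup closed under the
star operation on both sides. -/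
def IsIdeal (I : AddSubgroup A) : Prop :=
  (∀ a : A, ∀ x ∈ I, a + x - a ∈ I) ∧
  (∀ a : A, ∀ x ∈ I, star a x ∈ I) ∧
  (∀ a : A, ∀ x ∈ I, star x a ∈ I)

/-- `Z_R(A)`: additively central elements annihilating all right distributors. -/
def ZR (A : Type*) [SkewBrace A] : Set A :=
  {z | (∀ a : A, z + a = a + z) ∧ ∀ b c : A, rd z b c = 0 ∧ rd b z c = 0 ∧ rd b c z = 0}

end SkewBrace

open SkewBrace


/-!
Every generator of `J = [I,A]_Ab` lies in `I`, so `J ≤ I`, and `J` is normal in `(A,+)`.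
Modulo `J`, elements of `I` are additively central and `i ∘ x ≡ i + x` for `i ∈ I`.
For `k ∈ J` and the circle commutator `u = k ∘ b ∘ k' ∘ b' ∈ J` we have
`u ∘ (b ∘ k) = k ∘ b`, hence `b ∘ k ≡ u + b ∘ k ≡ k + b ≡ b + k`, i.e. `b * k ≡ 0`.
-/

namespace SkewBrace

variable {A : Type*} [SkewBrace A]

theorem cinv_circ_cancel_left (a x : A) : circ (cinv a) (circ a x) = x := by
  rw [← circ_assoc, cinv_circ, zero_circ]

theorem circ_eq_add_star_add (a b : A) : circ a b = a + star a b + b := by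
  simp [star, sub_eq_add_neg, add_assoc]

/-- The additive subgroup `[I,A]_Ab`. -/
def abCommutator (I : AddSubgroup A) : AddSubgroup A :=
  AddSubgroup.closure
    {x : A | ∃ i ∈ I, ∃ b : A,
      x = i + b - i - b ∨ x = star i b ∨ x = circ (circ (circ i b) (cinv i)) (cinv b)}

theorem commutator_mem_abCommutator {I : AddSubgroup A} {i : A} (hi : i ∈ I) (b : A) :
    i + b - i - b ∈ abCommutator I :=
  AddSubgroup.subset_closure ⟨i, hi, b, .inl rfl⟩

theorem star_mem_abCommutator_of_mem {I : AddSubgroup A} {i : A} (hi : i ∈ I) (b : A) :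
    star i b ∈ abCommutator I :=
  AddSubgroup.subset_closure ⟨i, hi, b, .inr (.inl rfl)⟩

theorem circ_commutator_mem_abCommutator {I : AddSubgroup A} {i : A} (hi : i ∈ I) (b : A) :
    circ (circ (circ i b) (cinv i)) (cinv b) ∈ abCommutator I :=
  AddSubgroup.subset_closure ⟨i, hi, b, .inr (.inr rfl)⟩

section Quotient

variable {I : AddSubgroup A} [(abCommutator I).Normal]

theorem mk_add_comm_of_mem {i : A} (hi : i ∈ I) (b : A) :
    (i : A ⧸ abCommutator I) + b = b + i := by
  have h := (QuotientAddGroup.eq_zero_iff _).mpr (commutator_mem_abCommutator hi b)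
  rw [QuotientAddGroup.mk_sub, QuotientAddGroup.mk_sub, QuotientAddGroup.mk_add] at h
  exact sub_eq_iff_eq_add.mp (sub_eq_zero.mp h)

theorem mk_circ_of_mem {i : A} (hi : i ∈ I) (b : A) :
    ((circ i b : A) : A ⧸ abCommutator I) = i + b := by
  rw [circ_eq_add_star_add, QuotientAddGroup.mk_add, QuotientAddGroup.mk_add,
    (QuotientAddGroup.eq_zero_iff _).mpr (star_mem_abCommutator_of_mem hi b), add_zero]

end Quotient

namespace IsIdeal

variable {I : AddSubgroup A} (hI : IsIdeal I)
include hI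

theorem circ_mem {i j : A} (hi : i ∈ I) (hj : j ∈ I) : circ i j ∈ I := by
  rw [circ_eq_add_star_add]
  exact I.add_mem (I.add_mem hi (hI.2.1 i j hj)) hj

theorem cinv_mem {i : A} (hi : i ∈ I) : cinv i ∈ I := by
  have h : i + star i (cinv i) + cinv i = 0 := by
    rw [← circ_eq_add_star_add, circ_cinv]
  rw [eq_neg_of_add_eq_zero_right h]
  exact I.neg_mem (I.add_mem hi (hI.2.2 (cinv i) i hi))

theorem circ_conj_mem (b : A) {i : A} (hi : i ∈ I) : circ (circ b i) (cinv b) ∈ I := by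
  -- `i ∘ b' = m + b'` with `m ∈ I`, and `b ∘ b' = 0` absorbs the `b'`
  set m := i + star i (cinv b)
  have hm : m ∈ I := I.add_mem hi (hI.2.2 (cinv b) i hi)
  have h : circ (circ b i) (cinv b) = b + (star b m + m) - b := by
    rw [circ_assoc, circ_eq_add_star_add i, compat, circ_cinv, circ_eq_add_star_add b m]
    simp only [add_zero, add_assoc]
  rw [h]
  exact hI.1 b _ (I.add_mem (hI.2.1 b m hm) hm)

theorem circ_commutator_mem {i : A} (hi : i ∈ I) (b : A) :
    circ (circ (circ i b) (cinv i)) (cinv b) ∈ I := by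
  rw [circ_assoc, circ_assoc, ← circ_assoc b]
  exact hI.circ_mem hi (hI.circ_conj_mem b (hI.cinv_mem hi))

theorem abCommutator_le : abCommutator I ≤ I := by
  refine (AddSubgroup.closure_le I).mpr ?_
  rintro x ⟨i, hi, b, rfl | rfl | rfl⟩
  · have h : i + (b + -i - b) ∈ I := I.add_mem hi (hI.1 b (-i) (I.neg_mem hi))
    simpa only [SetLike.mem_coe, sub_eq_add_neg, add_assoc] using h
  · exact hI.2.2 b i hi
  · exact hI.circ_commutator_mem hi b

theorem abCommutator_normal : (abCommutator I).Normal := by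
  rw [← AddSubgroup.normalizer_eq_top_iff, eq_top_iff, abCommutator,
    AddSubgroup.le_normalizer_closure_iff]
  intro g _ x hx
  have hxJ : x ∈ abCommutator I := AddSubgroup.subset_closure hx
  have h : g + x + -g = -(x + g - x - g) + x := by
    simp only [sub_eq_add_neg, neg_add_rev, neg_neg, add_assoc, neg_add_cancel, add_zero]
  rw [h]
  exact AddSubgroup.add_mem _
    (AddSubgroup.neg_mem _ (commutator_mem_abCommutator (hI.abCommutator_le hxJ) g)) hxJ

theorem star_mem_abCommutator (b : A) {k : A} (hk : k ∈ abCommutator I) :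
    star b k ∈ abCommutator I := by
  have := hI.abCommutator_normal
  have hkI : k ∈ I := hI.abCommutator_le hk
  set u := circ (circ (circ k b) (cinv k)) (cinv b)
  have huJ : u ∈ abCommutator I := circ_commutator_mem_abCommutator hkI b
  have hu : circ u (circ b k) = circ k b := by
    simp only [u, circ_assoc, cinv_circ_cancel_left, cinv_circ, circ_zero]
  have hbk : ((circ b k : A) : A ⧸ abCommutator I) = b + k :=
    calc ((circ b k : A) : A ⧸ abCommutator I)
        = u + ((circ b k : A) : A ⧸ abCommutator I) := by
          rw [(QuotientAddGroup.eq_zero_iff u).mpr huJ, zero_add]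
      _ = (circ k b : A) := by rw [← mk_circ_of_mem (hI.abCommutator_le huJ), hu]
      _ = k + b := mk_circ_of_mem hkI b
      _ = b + k := mk_add_comm_of_mem hkI b
  rw [← QuotientAddGroup.eq_zero_iff, star, QuotientAddGroup.mk_sub, QuotientAddGroup.mk_add,
    QuotientAddGroup.mk_neg, hbk, neg_add_cancel_left, sub_self]

end IsIdeal

end SkewBrace

theorem stmt12 {A : Type*} [SkewBrace A] (I : AddSubgroup A) (hI : IsIdeal I)
    (J : AddSubgroup A)
    (hJ : J = AddSubgroup.closure
      {x : A | ∃ i ∈ I, ∃ b : A,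
        x = i + b - i - b ∨ x = star i b ∨
        x = SkewBrace.circ (SkewBrace.circ (SkewBrace.circ i b) (SkewBrace.cinv i))
              (SkewBrace.cinv b)}) :
    ∀ k ∈ J, ∀ b : A, star b k ∈ J := by
  subst hJ
  exact fun k hk b => hI.star_mem_abCommutator b hk
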